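/- Let (π_i)_{i∈ℕ} be a sequence of positive reals such that (π_{i+1}/π_i) is nondecreasing and sup_i π_{i+1}/π_i ≤ r(K,∂). Define Θ : K^ℕ → K^ℕ by Θ(a)_i = Σ_{j+k=i} ((−1)^j/k!)·∂^k(a_j). Then for every a ∈ K^ℕ with sup_i |a_i|π_i < ∞ one has sup_i |Θ(a)_i| π_i ≤ sup_i |a_i| π_i; since Θ is an involution, in fact sup_i |Θ(a)_i| π_i = sup_i |a_i| π_i. -/

import Mathlib

open scoped Classical
noncomputable section

namespace Ohkubo

/-- A derivation on a field: additive and satisfying the Leibniz rule. -/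
structure IsDerivation {K : Type} [Field K] (d : K → K) : Prop where
  map_add : ∀ x y : K, d (x + y) = d x + d y
  leibniz : ∀ x y : K, d (x * y) = d x * y + x * d y

/-- A map bounded for the norm. -/
def IsBoundedMap {K : Type} [NontriviallyNormedField K] (d : K → K) : Prop :=
  ∃ C : ℝ, ∀ x : K, ‖d x‖ ≤ C * ‖x‖

/-- Operator norm of a map with respect to a norm-like function `N`. -/
def opNormOn {V : Type} [Zero V] (N : V → ℝ) (f : V → V) : ℝ :=
  sSup {t : ℝ | ∃ v : V, v ≠ 0 ∧ t = N (f v) / N v}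

/-- Spectral norm of a map with respect to a norm-like function `N`. -/
def spNormOn {V : Type} [Zero V] (N : V → ℝ) (f : V → V) : ℝ :=
  sInf {t : ℝ | ∃ n : ℕ, 1 ≤ n ∧ t = (opNormOn N (f^[n])) ^ ((n : ℝ)⁻¹)}

/-- The residue characteristic `p(K)`: the unique prime `p` with `‖p‖ < 1`, if it exists,
and `0` otherwise. -/
def residueChar (K : Type) [NontriviallyNormedField K] : ℕ :=
  if h : ∃ p : ℕ, p.Prime ∧ ‖(p : K)‖ < 1 then h.choose else 0

/-- `ω(K) = |p(K)|^(1/(p(K)-1))` if `p(K) > 0`, and `1` otherwise. -/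
def omegaK (K : Type) [NontriviallyNormedField K] : ℝ :=
  if residueChar K = 0 then 1
  else ‖((residueChar K : ℕ) : K)‖ ^ (((residueChar K : ℝ) - 1)⁻¹)

/-- The spectral norm of a map `K → K`, computed with the norm of `K`. -/
def spNormK {K : Type} [NontriviallyNormedField K] (d : K → K) : ℝ :=
  spNormOn (fun x : K => ‖x‖) d

/-- `r(K,∂) = ω(K)/|∂|_sp`. -/
def radius {K : Type} [NontriviallyNormedField K] (d : K → K) : ℝ :=
  omegaK K / spNormK d

/-- The `i`-th term `‖a_i‖ s^i` entering the `s`-Gauss norm. -/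
def gaussTerm {K : Type} [NontriviallyNormedField K] (s : ℝ) (f : PowerSeries K) (i : ℕ) : ℝ :=
  ‖(PowerSeries.coeff (R := K) i) f‖ * s ^ i

/-- `|f|_s < ∞`. -/
def MemBd {K : Type} [NontriviallyNormedField K] (s : ℝ) (f : PowerSeries K) : Prop :=
  BddAbove (Set.range (gaussTerm s f))

/-- `K[[X/s]]_0`, the power series with bounded `s`-Gauss norm. -/
def bdRing (K : Type) [NontriviallyNormedField K] (s : ℝ) : Set (PowerSeries K) :=
  {f | MemBd s f}

/-- `K{X/r}`, the power series convergent on the open disc of radius `r`. -/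
def convRing (K : Type) [NontriviallyNormedField K] (r : ℝ) : Set (PowerSeries K) :=
  {f | ∀ s : ℝ, 0 < s → s < r → MemBd s f}

/-- The formal derivative `∂_X` of a power series. -/
def dX {K : Type} [Field K] (f : PowerSeries K) : PowerSeries K :=
  PowerSeries.mk fun i => ((i : K) + 1) * (PowerSeries.coeff (R := K) (i + 1)) f

/-- The Taylor map `g_0(c) = Σ_i (∂^i(c)/i!) X^i`. -/
def taylor {K : Type} [Field K] (d : K → K) (c : K) : PowerSeries K :=
  PowerSeries.mk fun i => d^[i] c / (i.factorial : K)

/-- A (nonarchimedean, multiplicatively compatible) norm on a `K`-vector space. -/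
def CompatNorm (K : Type) {V : Type} [NontriviallyNormedField K] [AddCommGroup V] [Module K V]
    (N : V → ℝ) : Prop :=
  (∀ v : V, 0 ≤ N v) ∧ (∀ v : V, N v = 0 ↔ v = 0) ∧
    (∀ x y : V, N (x + y) ≤ max (N x) (N y)) ∧
    ∀ (c : K) (v : V), N (c • v) = ‖c‖ * N v

/-- The spectral norm of `f` equals `c` (computed with any compatible norm; the value is
independent of the choice). -/
def HasSpNorm (K : Type) {V : Type} [NontriviallyNormedField K] [AddCommGroup V] [Module K V]
    (f : V → V) (c : ℝ) : Prop :=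
  ∃ N : V → ℝ, CompatNorm K N ∧ spNormOn N f = c

/-- A differential operator on `V` relative to the derivation `d`. -/
def IsDiffOp {K V : Type} [NontriviallyNormedField K] [AddCommGroup V] [Module K V]
    (d : K → K) (D : V → V) : Prop :=
  (∀ x y : V, D (x + y) = D x + D y) ∧ ∀ (c : K) (v : V), D (c • v) = d c • v + c • D v

/-- `(V, D)` is an irreducible differential module. -/
def IsIrred (K : Type) (V : Type) [NontriviallyNormedField K] [AddCommGroup V] [Module K V]
    (D : V → V) : Prop :=
  (∃ v : V, v ≠ 0) ∧ ∀ p : Submodule K V, (∀ x ∈ p, D x ∈ p) → p = ⊥ ∨ p = ⊤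

/-- `DW` is the operator induced by `D` on the subquotient `q ⧸ p`. -/
def InducedOn {K V : Type} [NontriviallyNormedField K] [AddCommGroup V] [Module K V]
    (D : V → V) (p q : Submodule K V)
    (DW : (↥q ⧸ p.comap q.subtype) → (↥q ⧸ p.comap q.subtype)) : Prop :=
  ∀ (x : V) (hx : x ∈ q) (hDx : D x ∈ q),
    DW (Submodule.Quotient.mk ⟨x, hx⟩) = Submodule.Quotient.mk ⟨D x, hDx⟩

/-- Every irreducible subquotient of `(V, D)` has spectral norm `c`. -/
def PureRadius (K : Type) (V : Type) [NontriviallyNormedField K] [AddCommGroup V] [Module K V]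
    (D : V → V) (c : ℝ) : Prop :=
  ∀ p q : Submodule K V, p ≤ q → (∀ x ∈ p, D x ∈ p) → (∀ x ∈ q, D x ∈ q) →
    ∀ DW : (↥q ⧸ p.comap q.subtype) → (↥q ⧸ p.comap q.subtype),
      InducedOn D p q DW → IsIrred K (↥q ⧸ p.comap q.subtype) DW → HasSpNorm K DW c

/-- `V_r`: the sum of all `D`-stable subspaces all of whose irreducible subquotients have
spectral norm `ω(K)/r`. -/
def pureSub (K : Type) {V : Type} [NontriviallyNormedField K] [AddCommGroup V] [Module K V]
    (D : V → V) (r : ℝ) : Submodule K V :=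
  sSup {p : Submodule K V | ∃ hp : ∀ x ∈ p, D x ∈ p,
    PureRadius K ↥p (fun y : ↥p => (⟨D y.1, hp y.1 y.2⟩ : ↥p)) (omegaK K / r)}

/-- `V_{r_J}`: the sum of all subspaces stable under all the `D j` all of whose irreducible
`D j`-subquotients have spectral norm `ω(K)/r_j`, for every `j`. -/
def pureSubFam (K : Type) {V J : Type} [NontriviallyNormedField K] [AddCommGroup V] [Module K V]
    (D : J → V → V) (rJ : J → ℝ) : Submodule K V :=
  sSup {p : Submodule K V | ∃ hp : ∀ (j : J), ∀ x ∈ p, D j x ∈ p,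
    ∀ j : J, PureRadius K ↥p (fun y : ↥p => (⟨D j y.1, hp j y.1 y.2⟩ : ↥p)) (omegaK K / rJ j)}

/-- A solution map: an additive map `V → K[[X]]` semilinear for the Taylor map and
intertwining `D` with `∂_X`. -/
def IsSolMap {K V : Type} [NontriviallyNormedField K] [AddCommGroup V] [Module K V]
    (d : K → K) (D : V → V) (s : V → PowerSeries K) : Prop :=
  (∀ x y : V, s (x + y) = s x + s y) ∧
    (∀ (c : K) (v : V), s (c • v) = taylor d c * s v) ∧
    ∀ v : V, s (D v) = dX (s v)

/-- `Θ(a)_i = Σ_{j+k=i} ((-1)^j / k!) ∂^k(a_j)`. -/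
def thetaMap {K : Type} [Field K] (d : K → K) (a : ℕ → K) : ℕ → K := fun i =>
  ∑ jk ∈ Finset.HasAntidiagonal.antidiagonal i,
    ((-1 : K) ^ jk.1 / (jk.2.factorial : K)) * d^[jk.2] (a jk.1)

section Basics

variable {K : Type} [Field K] {d : K → K}

/-- `d` as an additive monoid hom. -/
def dHom (hd : IsDerivation d) : K →+ K := AddMonoidHom.mk' d hd.map_add

lemma d_zero (hd : IsDerivation d) : d 0 = 0 := (dHom hd).map_zero

lemma dIter_add (hd : IsDerivation d) (k : ℕ) (x y : K) :
    d^[k] (x + y) = d^[k] x + d^[k] y := by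
  induction k generalizing x y with
  | zero => rfl
  | succ k ih => simp only [Function.iterate_succ_apply, hd.map_add, ih]

lemma dIter_zero (hd : IsDerivation d) (k : ℕ) : d^[k] (0 : K) = 0 := by
  induction k with
  | zero => rfl
  | succ k ih => rw [Function.iterate_succ_apply, d_zero hd, ih]

/-- `d^[k]` as an additive monoid hom. -/
def dIterHom (hd : IsDerivation d) (k : ℕ) : K →+ K :=
  AddMonoidHom.mk' (d^[k]) (dIter_add hd k)

lemma d_one (hd : IsDerivation d) : d (1 : K) = 0 := by
  have := hd.leibniz 1 1
  simp only [mul_one, one_mul] at this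
  linear_combination -this

lemma d_natCast (hd : IsDerivation d) (n : ℕ) : d (n : K) = 0 := by
  induction n with
  | zero => exact_mod_cast d_zero hd
  | succ n ih => push_cast; rw [hd.map_add, ih, d_one hd, add_zero]

lemma d_neg (hd : IsDerivation d) (x : K) : d (-x) = - d x := (dHom hd).map_neg x

lemma d_mul_const (hd : IsDerivation d) {c : K} (hc : d c = 0) (x : K) :
    d (c * x) = c * d x := by
  rw [hd.leibniz, hc, zero_mul, zero_add]

lemma d_pow_const (hd : IsDerivation d) {c : K} (hc : d c = 0) (n : ℕ) : d (c ^ n) = 0 := by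
  induction n with
  | zero => simpa using d_one hd
  | succ n ih => rw [pow_succ, hd.leibniz, ih, hc, zero_mul, mul_zero, add_zero]

lemma d_inv_const (hd : IsDerivation d) {c : K} (hc : d c = 0) : d c⁻¹ = 0 := by
  rcases eq_or_ne c 0 with rfl | h
  · simpa using d_zero hd
  · have h1 : d (c * c⁻¹) = 0 := by rw [mul_inv_cancel₀ h]; exact d_one hd
    rw [hd.leibniz, hc, zero_mul, zero_add] at h1
    rcases mul_eq_zero.1 h1 with h2 | h2
    · exact absurd h2 h
    · exact h2

lemma d_coef (hd : IsDerivation d) (l m : ℕ) : d ((-1 : K) ^ l / (m.factorial : K)) = 0 := by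
  have h1 : d ((-1 : K) ^ l) = 0 := by
    apply d_pow_const hd
    rw [show (-1 : K) = -(1:K) by ring, d_neg hd, d_one hd, neg_zero]
  have h2 : d (((m.factorial : ℕ) : K)⁻¹) = 0 := d_inv_const hd (d_natCast hd _)
  rw [div_eq_mul_inv, hd.leibniz, h1, h2, zero_mul, mul_zero, add_zero]

lemma dIter_mul_const (hd : IsDerivation d) {c : K} (hc : d c = 0) (k : ℕ) (x : K) :
    d^[k] (c * x) = c * d^[k] x := by
  induction k generalizing x with
  | zero => rfl
  | succ k ih => simp only [Function.iterate_succ_apply, d_mul_const hd hc, ih]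

lemma dIter_sum (hd : IsDerivation d) {ι : Type} (t : Finset ι) (f : ι → K) (k : ℕ) :
    d^[k] (∑ i ∈ t, f i) = ∑ i ∈ t, d^[k] (f i) :=
  map_sum (dIterHom hd k) f t

/-- Iterated Leibniz rule. -/
lemma iter_leibniz (hd : IsDerivation d) (k : ℕ) (x y : K) :
    d^[k] (x * y) = ∑ uv ∈ Finset.HasAntidiagonal.antidiagonal k,
      (k.choose uv.1 : K) * (d^[uv.1] x * d^[uv.2] y) := by
  induction k with
  | zero => simp
  | succ k ih =>
    rw [Function.iterate_succ_apply', ih,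
      show (d (∑ uv ∈ Finset.HasAntidiagonal.antidiagonal k, (k.choose uv.1 : K) * (d^[uv.1] x * d^[uv.2] y)))
        = (dHom hd) (∑ uv ∈ Finset.HasAntidiagonal.antidiagonal k, (k.choose uv.1 : K) * (d^[uv.1] x * d^[uv.2] y)) from rfl,
      map_sum (dHom hd)]
    have hterm : ∀ uv ∈ Finset.HasAntidiagonal.antidiagonal k,
        (dHom hd) ((k.choose uv.1 : K) * (d^[uv.1] x * d^[uv.2] y))
          = (k.choose uv.1 : K) * (d^[uv.1+1] x * d^[uv.2] y)
            + (k.choose uv.1 : K) * (d^[uv.1] x * d^[uv.2+1] y) := by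
      intro uv _
      show d _ = _
      rw [d_mul_const hd (d_natCast hd _), hd.leibniz, mul_add,
        ← Function.iterate_succ_apply' d uv.1, ← Function.iterate_succ_apply' d uv.2]
    rw [Finset.sum_congr rfl hterm, Finset.sum_add_distrib]
    -- RHS:
    rw [Finset.Nat.sum_antidiagonal_succ
      (f := fun uv => ((k+1).choose uv.1 : K) * (d^[uv.1] x * d^[uv.2] y))]
    -- second sum on LHS: reindex via succ' on level k+1
    have h2 : (∑ uv ∈ Finset.HasAntidiagonal.antidiagonal k,
          (k.choose uv.1 : K) * (d^[uv.1] x * d^[uv.2+1] y))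
        = ∑ uv ∈ Finset.HasAntidiagonal.antidiagonal (k+1),
          (k.choose uv.1 : K) * (d^[uv.1] x * d^[uv.2] y) := by
      rw [Finset.Nat.sum_antidiagonal_succ'
        (f := fun uv => (k.choose uv.1 : K) * (d^[uv.1] x * d^[uv.2] y))]
      rw [Nat.choose_succ_self, Nat.cast_zero, zero_mul, zero_add]
    have h3 : (∑ uv ∈ Finset.HasAntidiagonal.antidiagonal (k+1),
          (k.choose uv.1 : K) * (d^[uv.1] x * d^[uv.2] y))
        = (k.choose 0 : K) * (d^[0] x * d^[k+1] y)
          + ∑ uv ∈ Finset.HasAntidiagonal.antidiagonal k,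
            (k.choose (uv.1+1) : K) * (d^[uv.1+1] x * d^[uv.2] y) := by
      rw [Finset.Nat.sum_antidiagonal_succ
        (f := fun uv => (k.choose uv.1 : K) * (d^[uv.1] x * d^[uv.2] y))]
    rw [h2, h3]
    have h4 : ∀ uv ∈ Finset.HasAntidiagonal.antidiagonal k,
        ((k+1).choose (uv.1+1) : K) * (d^[uv.1+1] x * d^[uv.2] y)
          = (k.choose uv.1 : K) * (d^[uv.1+1] x * d^[uv.2] y)
            + (k.choose (uv.1+1) : K) * (d^[uv.1+1] x * d^[uv.2] y) := by
      intro uv _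
      rw [Nat.choose_succ_succ, Nat.cast_add, add_mul]
    rw [Finset.sum_congr rfl h4, Finset.sum_add_distrib]
    simp only [Nat.choose_zero_right, Nat.choose_succ_self_right, Nat.cast_one, one_mul,
      Function.iterate_zero_apply]
    ring

end Basics

section NA

variable {K : Type} [NontriviallyNormedField K]

lemma na_sum_le (hna : IsNonarchimedean fun x : K => ‖x‖) {ι : Type} (t : Finset ι)
    (f : ι → K) {B : ℝ} (hB : 0 ≤ B) (h : ∀ i ∈ t, ‖f i‖ ≤ B) :
    ‖∑ i ∈ t, f i‖ ≤ B := by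
  classical
  induction t using Finset.induction with
  | empty => simpa using hB
  | insert a s hx ih =>
    rw [Finset.sum_insert hx]
    refine le_trans (hna _ _) (max_le (h a (Finset.mem_insert_self a s)) ?_)
    exact ih fun i hi => h i (Finset.mem_insert_of_mem hi)

lemma na_sum_lt (hna : IsNonarchimedean fun x : K => ‖x‖) {ι : Type} (t : Finset ι)
    (f : ι → K) {B : ℝ} (hB : 0 < B) (h : ∀ i ∈ t, ‖f i‖ < B) :
    ‖∑ i ∈ t, f i‖ < B := by
  classical
  induction t using Finset.induction with
  | empty => simpa using hB
  | insert a s hx ih =>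
    rw [Finset.sum_insert hx]
    refine lt_of_le_of_lt (hna _ _) (max_lt (h a (Finset.mem_insert_self a s)) ?_)
    exact ih fun i hi => h i (Finset.mem_insert_of_mem hi)

lemma na_natCast_le_one (hna : IsNonarchimedean fun x : K => ‖x‖) (n : ℕ) :
    ‖(n : K)‖ ≤ 1 := by
  induction n with
  | zero => simp
  | succ n ih =>
    push_cast
    refine le_trans (hna _ _) (max_le ih (by simp))

lemma na_intCast_le_one (hna : IsNonarchimedean fun x : K => ‖x‖) (z : ℤ) :
    ‖(z : K)‖ ≤ 1 := by
  rcases le_or_gt 0 z with h | h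
  · lift z to ℕ using h
    exact_mod_cast na_natCast_le_one hna z
  · have h0 : ((-z).toNat : ℤ) = -z := Int.toNat_of_nonneg (by omega)
    have h2 : (z:K) = -(((-z).toNat : ℕ) : K) := by
      have := congrArg (fun t : ℤ => (t : K)) h0
      push_cast at this
      rw [this]; ring
    rw [h2, norm_neg]
    exact na_natCast_le_one hna _

end NA

section Omega

variable (K : Type) [NontriviallyNormedField K] [CharZero K]

/-- In the residue characteristic zero case, all nonzero naturals have norm one. -/
lemma norm_natCast_eq_one (hna : IsNonarchimedean fun x : K => ‖x‖)
    (hex : ¬ ∃ p : ℕ, p.Prime ∧ ‖(p : K)‖ < 1) :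
    ∀ n : ℕ, n ≠ 0 → ‖(n : K)‖ = 1 := by
  intro n
  induction n using Nat.strong_induction_on with
  | _ n ih =>
    intro hn
    rcases eq_or_ne n 1 with rfl | h1
    · simp
    · have h2 : 2 ≤ n := by omega
      have hl : n.minFac.Prime := Nat.minFac_prime h1
      have hdvd : n.minFac ∣ n := Nat.minFac_dvd n
      obtain ⟨m, hm⟩ := hdvd
      have hm0 : m ≠ 0 := by rintro rfl; simp at hm; omega
      have hmlt : m < n := by
        have h3 : 2 * m ≤ n := by
          rw [hm]; exact Nat.mul_le_mul_right m hl.two_le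
        have := Nat.pos_of_ne_zero hm0
        omega
      have hmn : ‖(m : K)‖ = 1 := ih m hmlt hm0
      have hnf : ‖((n.minFac : ℕ) : K)‖ = 1 := by
        refine le_antisymm (na_natCast_le_one hna _) ?_
        by_contra hlt
        push_neg at hlt
        exact hex ⟨n.minFac, hl, hlt⟩
      rw [hm]
      push_cast
      rw [norm_mul, hmn, hnf, one_mul]

lemma omega_pos (hna : IsNonarchimedean fun x : K => ‖x‖) : 0 < omegaK K := by
  unfold omegaK
  split
  · norm_num
  · rename_i h
    apply Real.rpow_pos_of_pos
    have : residueChar K ≠ 0 := h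
    unfold residueChar at this ⊢
    split at this
    · rename_i hex
      have hp := hex.choose_spec.1
      rw [dif_pos hex]
      have : (hex.choose : K) ≠ 0 := by
        exact_mod_cast Nat.cast_ne_zero.mpr hp.ne_zero
      simpa using norm_pos_iff.mpr this
    · simp at this

/-- The factorial norm bound `‖k!‖ ≥ ω^k`. -/
lemma norm_factorial_ge (hna : IsNonarchimedean fun x : K => ‖x‖) (k : ℕ) :
    omegaK K ^ k ≤ ‖((k.factorial : ℕ) : K)‖ := by
  unfold omegaK residueChar
  by_cases hex : ∃ p : ℕ, p.Prime ∧ ‖(p : K)‖ < 1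
  · rw [dif_pos hex]
    set p := hex.choose with hpdef
    obtain ⟨hp, hplt⟩ := hex.choose_spec
    have hppos : (0:ℝ) < ‖(p : K)‖ := by
      have : (p : K) ≠ 0 := Nat.cast_ne_zero.mpr hp.ne_zero
      simpa using norm_pos_iff.mpr this
    rw [if_neg hp.ne_zero]
    -- p-adic valuation of k!
    set v := (k.factorial).factorization p with hv
    -- norm of coprime-to-p numbers is 1
    have hcop : ∀ m : ℕ, m ≠ 0 → ¬ (p ∣ m) → ‖(m : K)‖ = 1 := by
      intro m
      induction m using Nat.strong_induction_on with
      | _ m ih =>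
        intro hm0 hpm
        rcases eq_or_ne m 1 with rfl | h1
        · simp
        · have hl : m.minFac.Prime := Nat.minFac_prime h1
          obtain ⟨m', hm'⟩ := Nat.minFac_dvd m
          have hm'0 : m' ≠ 0 := by rintro rfl; simp at hm'; exact hm0 hm'
          have hm'lt : m' < m := by
            have h3 : 2 * m' ≤ m := by
              rw [hm']; exact Nat.mul_le_mul_right m' hl.two_le
            have := Nat.pos_of_ne_zero hm'0
            omega
          have hpm' : ¬ (p ∣ m') := fun hc => hpm (hm' ▸ Dvd.dvd.mul_left hc m.minFac)
          have hne : m.minFac ≠ p := fun hc => hpm (by rw [← hc]; exact ⟨m', hm'⟩)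
          -- minFac has norm 1 via Bezout
          have hnf : ‖((m.minFac : ℕ) : K)‖ = 1 := by
            refine le_antisymm (na_natCast_le_one hna _) ?_
            by_contra hlt
            push_neg at hlt
            have hco : Nat.Coprime p m.minFac := (Nat.coprime_primes hp hl).mpr (Ne.symm hne)
            obtain ⟨u, w, huw⟩ := Nat.isCoprime_iff_coprime.mpr hco
            have h1' : (1:K) = u * p + w * m.minFac := by
              have := congrArg (fun z : ℤ => (z : K)) huw
              push_cast at this
              exact this.symm
            have : ‖(1:K)‖ ≤ max (‖(u:K) * (p:K)‖) (‖(w:K) * (m.minFac : K)‖) := by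
              rw [h1']; exact hna _ _
            rw [norm_one] at this
            rcases max_cases (‖(u:K) * (p:K)‖) (‖(w:K) * (m.minFac : K)‖) with ⟨he, _⟩ | ⟨he, _⟩ <;>
              rw [he] at this
            · rw [norm_mul] at this
              nlinarith [na_intCast_le_one hna u, norm_nonneg ((u:K)), hplt, hppos]
            · rw [norm_mul] at this
              have h1 := na_intCast_le_one hna w
              have h2 : (0:ℝ) ≤ ‖(w:K)‖ := norm_nonneg _
              nlinarith [norm_nonneg ((m.minFac : ℕ) : K)]
          rw [hm']
          push_cast
          rw [norm_mul, hnf, one_mul]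
          exact ih m' hm'lt hm'0 hpm'
    -- ‖k!‖ = ‖p‖ ^ v
    have hfactnz : k.factorial ≠ 0 := Nat.factorial_ne_zero k
    have hsplit : (k.factorial : K) = (p : K) ^ v * ((k.factorial / p ^ v : ℕ) : K) := by
      have := Nat.ordProj_mul_ordCompl_eq_self k.factorial p
      rw [← hv] at this
      exact_mod_cast (congrArg (fun z : ℕ => (z : K)) this).symm
    have hnormfact : ‖(k.factorial : K)‖ = ‖(p : K)‖ ^ v := by
      rw [hsplit, norm_mul, norm_pow]
      rw [hcop _ (Nat.ordCompl_pos p hfactnz).ne' (Nat.not_dvd_ordCompl hp hfactnz), mul_one]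
    rw [hnormfact]
    -- Legendre : (p-1) * v ≤ k
    have hleg : (p - 1) * v ≤ k := by
      have : Fact p.Prime := ⟨hp⟩
      have h := sub_one_mul_padicValNat_factorial (p := p) k
      rw [hv, Nat.factorization_def _ hp, h]
      omega
    -- conclude by rpow comparison
    have hb1 : ‖(p : K)‖ ≤ 1 := na_natCast_le_one hna p
    have hωk : (‖(p : K)‖ ^ (((p:ℝ) - 1)⁻¹)) ^ k = ‖(p : K)‖ ^ ((k : ℝ) * ((p:ℝ)-1)⁻¹) := by
      rw [← Real.rpow_natCast (‖(p : K)‖ ^ (((p:ℝ) - 1)⁻¹)) k, ← Real.rpow_mul hppos.le]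
      ring_nf
    rw [hωk]
    have hvk : ‖(p : K)‖ ^ v = ‖(p : K)‖ ^ ((v : ℝ)) := by
      rw [Real.rpow_natCast]
    rw [hvk]
    apply Real.rpow_le_rpow_of_exponent_ge hppos hb1
    -- (v : ℝ) ≤ k * (p-1)⁻¹
    have hp1 : (1:ℝ) ≤ (p:ℝ) - 1 := by
      have := hp.two_le
      have : (2:ℝ) ≤ (p:ℝ) := by exact_mod_cast this
      linarith
    rw [← div_eq_mul_inv, le_div_iff₀ (by linarith)]
    have h2 : (((p-1) * v : ℕ) : ℝ) ≤ (k : ℝ) := by exact_mod_cast hleg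
    have h3 : (((p:ℕ) - 1 : ℕ) : ℝ) = (p:ℝ) - 1 := by
      have := hp.one_le
      push_cast [Nat.cast_sub this]
      have h1p : 1 ≤ p := this
      rw [Nat.cast_sub h1p, Nat.cast_one]
    rw [Nat.cast_mul, h3] at h2
    linarith
  · rw [dif_neg hex, if_pos rfl, one_pow]
    rw [norm_natCast_eq_one K hna hex _ (Nat.factorial_ne_zero k)]

end Omega

section PS

variable {K : Type} [NontriviallyNormedField K]

lemma na_sub (hna : IsNonarchimedean fun x : K => ‖x‖) (u v : K) :
    ‖u - v‖ ≤ max ‖u‖ ‖v‖ := by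
  have := hna u (-v)
  simpa [sub_eq_add_neg] using this

lemma na_add_ge (hna : IsNonarchimedean fun x : K => ‖x‖) {u v : K} (h : ‖v‖ < ‖u‖) :
    ‖u‖ ≤ ‖u + v‖ := by
  have h2 : ‖u‖ ≤ max ‖u + v‖ ‖v‖ := by
    have := hna (u + v) (-v)
    simpa using this
  rcases max_cases ‖u + v‖ ‖v‖ with ⟨he, _⟩ | ⟨he, _⟩ <;> rw [he] at h2
  · exact h2
  · linarith

/-- Coefficientwise bound on products. -/
lemma coeff_mul_bound (hna : IsNonarchimedean fun x : K => ‖x‖)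
    {s : ℝ} (hs : 0 < s) {f g : PowerSeries K} {A B : ℝ} (hA : 0 ≤ A) (hB : 0 ≤ B)
    (hf : ∀ u, ‖PowerSeries.coeff (R := K) u f‖ * s ^ u ≤ A)
    (hg : ∀ v, ‖PowerSeries.coeff (R := K) v g‖ * s ^ v ≤ B) (j : ℕ) :
    ‖PowerSeries.coeff (R := K) j (f * g)‖ * s ^ j ≤ A * B := by
  rw [PowerSeries.coeff_mul]
  rw [← le_div_iff₀ (pow_pos hs j)]
  refine na_sum_le hna _ _ (by positivity) ?_
  intro uv huv
  have huv' : uv.1 + uv.2 = j := Finset.HasAntidiagonal.mem_antidiagonal.mp huv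
  rw [le_div_iff₀ (pow_pos hs j), norm_mul]
  have h1 := hf uv.1
  have h2 := hg uv.2
  have : s ^ j = s ^ uv.1 * s ^ uv.2 := by rw [← pow_add, huv']
  rw [this]
  have e1 : (0:ℝ) ≤ ‖PowerSeries.coeff (R := K) uv.1 f‖ * s ^ uv.1 := by positivity
  have e2 : (0:ℝ) ≤ ‖PowerSeries.coeff (R := K) uv.2 g‖ * s ^ uv.2 := by positivity
  calc ‖PowerSeries.coeff (R := K) uv.1 f‖ * ‖PowerSeries.coeff (R := K) uv.2 g‖ * (s ^ uv.1 * s ^ uv.2)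
      = (‖PowerSeries.coeff (R := K) uv.1 f‖ * s ^ uv.1) * (‖PowerSeries.coeff (R := K) uv.2 g‖ * s ^ uv.2) := by
        ring
    _ ≤ A * B := mul_le_mul h1 h2 e2 hA

lemma coeff_pow_bound (hna : IsNonarchimedean fun x : K => ‖x‖)
    {s : ℝ} (hs : 0 < s) {f : PowerSeries K} {A : ℝ} (hA : 0 ≤ A)
    (hf : ∀ u, ‖PowerSeries.coeff (R := K) u f‖ * s ^ u ≤ A) (n : ℕ) (j : ℕ) :
    ‖PowerSeries.coeff (R := K) j (f ^ n)‖ * s ^ j ≤ A ^ n := by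
  induction n generalizing j with
  | zero =>
    rw [pow_zero, pow_zero]
    rcases eq_or_ne j 0 with rfl | hj
    · simp
    · rw [PowerSeries.coeff_one, if_neg hj]
      simp
  | succ n ih =>
    rw [pow_succ, pow_succ]
    exact coeff_mul_bound hna hs (by positivity) hA ih hf j

end PS
section OpN

variable {K : Type} [NontriviallyNormedField K] {d : K → K}

lemma bound_exists (hdb : IsBoundedMap d) : ∃ C : ℝ, 0 ≤ C ∧ ∀ x : K, ‖d x‖ ≤ C * ‖x‖ := by
  obtain ⟨C, hC⟩ := hdb
  refine ⟨max C 0, le_max_right _ _, fun x => le_trans (hC x) ?_⟩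
  exact mul_le_mul_of_nonneg_right (le_max_left _ _) (norm_nonneg _)

lemma iter_bound {C : ℝ} (hC : ∀ x : K, ‖d x‖ ≤ C * ‖x‖) (hC0 : 0 ≤ C) (k : ℕ) (x : K) :
    ‖d^[k] x‖ ≤ C ^ k * ‖x‖ := by
  induction k generalizing x with
  | zero => simp
  | succ k ih =>
    rw [Function.iterate_succ_apply]
    calc ‖d^[k] (d x)‖ ≤ C ^ k * ‖d x‖ := ih (d x)
      _ ≤ C ^ k * (C * ‖x‖) := mul_le_mul_of_nonneg_left (hC x) (by positivity)
      _ = C ^ (k+1) * ‖x‖ := by ring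

lemma opN_nonneg (hdb : IsBoundedMap d) (k : ℕ) :
    0 ≤ opNormOn (fun x : K => ‖x‖) (d^[k]) := by
  obtain ⟨C, hC0, hC⟩ := bound_exists hdb
  have h1 : ((‖d^[k] (1:K)‖ / ‖(1:K)‖ : ℝ)) ∈
      {t : ℝ | ∃ v : K, v ≠ 0 ∧ t = ‖d^[k] v‖ / ‖v‖} := ⟨1, one_ne_zero, rfl⟩
  have hbdd : BddAbove {t : ℝ | ∃ v : K, v ≠ 0 ∧ t = ‖d^[k] v‖ / ‖v‖} := by
    refine ⟨C ^ k, ?_⟩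
    rintro t ⟨v, hv, rfl⟩
    rw [div_le_iff₀ (norm_pos_iff.mpr hv)]
    exact iter_bound hC hC0 k v
  refine le_trans ?_ (le_csSup hbdd h1)
  positivity

lemma opN_bound (hdb : IsBoundedMap d) (k : ℕ) (x : K) :
    ‖d^[k] x‖ ≤ opNormOn (fun x : K => ‖x‖) (d^[k]) * ‖x‖ := by
  obtain ⟨C, hC0, hC⟩ := bound_exists hdb
  rcases eq_or_ne x 0 with rfl | hx
  · have : d^[k] (0:K) = 0 ∨ ‖d^[k] (0:K)‖ ≤ C ^ k * ‖(0:K)‖ := Or.inr (iter_bound hC hC0 k 0)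
    have h2 := iter_bound hC hC0 k (0 : K)
    simp only [norm_zero, mul_zero] at h2 ⊢
    exact h2
  · have hbdd : BddAbove {t : ℝ | ∃ v : K, v ≠ 0 ∧ t = ‖d^[k] v‖ / ‖v‖} := by
      refine ⟨C ^ k, ?_⟩
      rintro t ⟨v, hv, rfl⟩
      rw [div_le_iff₀ (norm_pos_iff.mpr hv)]
      exact iter_bound hC hC0 k v
    have hmem : (‖d^[k] x‖ / ‖x‖ : ℝ) ∈
        {t : ℝ | ∃ v : K, v ≠ 0 ∧ t = ‖d^[k] v‖ / ‖v‖} := ⟨x, hx, rfl⟩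
    have := le_csSup hbdd hmem
    rw [div_le_iff₀ (norm_pos_iff.mpr hx)] at this
    exact this

/-- Growth estimate `‖d^[k] x‖ ≤ C βₘ^k ‖x‖` with `βₘ = (opnorm of d^[m])^{1/m}`. -/
lemma growth (hdb : IsBoundedMap d) (m : ℕ) (hm : 1 ≤ m)
    (hβ : 0 < opNormOn (fun x : K => ‖x‖) (d^[m]) ^ ((m : ℝ)⁻¹)) :
    ∃ C : ℝ, 1 ≤ C ∧ ∀ k (x : K),
      ‖d^[k] x‖ ≤ C * (opNormOn (fun x : K => ‖x‖) (d^[m]) ^ ((m : ℝ)⁻¹)) ^ k * ‖x‖ := by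
  obtain ⟨C0, hC00, hC0⟩ := bound_exists hdb
  set Nm := opNormOn (fun x : K => ‖x‖) (d^[m]) with hNm
  set β := Nm ^ ((m : ℝ)⁻¹) with hβdef
  have hNm0 : 0 ≤ Nm := opN_nonneg hdb m
  have hβm : β ^ m = Nm := by
    rw [hβdef, ← Real.rpow_natCast (Nm ^ ((m : ℝ)⁻¹)) m, ← Real.rpow_mul hNm0]
    have hm0 : (m:ℝ) ≠ 0 := by
      have : 0 < m := hm
      exact_mod_cast this.ne'
    rw [inv_mul_cancel₀ hm0]
    exact Real.rpow_one Nm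
  set C1 := max 1 C0 ^ m with hC1
  have hC11 : 1 ≤ C1 := one_le_pow₀ (le_max_left 1 C0)
  set Cβ := max 1 (β⁻¹ ^ m) with hCβ
  have hCβ1 : 1 ≤ Cβ := le_max_left _ _
  refine ⟨C1 * Cβ, one_le_mul_of_one_le_of_one_le hC11 hCβ1, ?_⟩
  intro k x
  -- decompose k = m * (k / m) + k % m
  obtain ⟨e, t, htm, hk⟩ : ∃ e t, t < m ∧ k = m * e + t :=
    ⟨k / m, k % m, Nat.mod_lt _ (by omega), (Nat.div_add_mod k m).symm⟩
  have hme : ∀ (e : ℕ) (z : K), ‖d^[m*e] z‖ ≤ Nm ^ e * ‖z‖ := by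
    intro e
    induction e with
    | zero => intro z; simp
    | succ e ih =>
      intro z
      have : m * (e+1) = m * e + m := by ring
      rw [this, Function.iterate_add_apply]
      calc ‖d^[m*e] (d^[m] z)‖ ≤ Nm ^ e * ‖d^[m] z‖ := ih _
        _ ≤ Nm ^ e * (Nm * ‖z‖) :=
            mul_le_mul_of_nonneg_left (opN_bound hdb m z) (by positivity)
        _ = Nm ^ (e+1) * ‖z‖ := by ring
  have ht : ‖d^[t] x‖ ≤ C1 * ‖x‖ := by
    calc ‖d^[t] x‖ ≤ C0 ^ t * ‖x‖ := iter_bound hC0 hC00 t x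
      _ ≤ C1 * ‖x‖ := by
          apply mul_le_mul_of_nonneg_right _ (norm_nonneg x)
          calc C0 ^ t ≤ max 1 C0 ^ t := pow_le_pow_left₀ hC00 (le_max_right 1 C0) t
            _ ≤ max 1 C0 ^ m := pow_le_pow_right₀ (le_max_left 1 C0) htm.le
  have hkx : ‖d^[k] x‖ ≤ Nm ^ e * (C1 * ‖x‖) := by
    rw [hk, Function.iterate_add_apply]
    calc ‖d^[m*e] (d^[t] x)‖ ≤ Nm ^ e * ‖d^[t] x‖ := hme e _
      _ ≤ Nm ^ e * (C1 * ‖x‖) := mul_le_mul_of_nonneg_left ht (by positivity)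
  -- Nm ^ e = β^(m*e) ≤ Cβ * β^k
  have hβpow : Nm ^ e * β ^ t = β ^ k := by
    rw [← hβm, ← pow_mul, ← pow_add, hk]
  have hβt : 1 ≤ Cβ * β ^ t := by
    rcases le_or_gt 1 β with h | h
    · have h1 : (1:ℝ) ≤ β ^ t := one_le_pow₀ h
      nlinarith
    · -- β < 1 : β⁻¹ ≥ 1, Cβ = β⁻¹^m ≥ β⁻¹^t = β^(-t)
      have hβi : 1 ≤ β⁻¹ := (one_le_inv_iff₀).mpr ⟨hβ, h.le⟩
      have h1 : β⁻¹ ^ t ≤ β⁻¹ ^ m := pow_le_pow_right₀ hβi htm.le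
      have h2 : β⁻¹ ^ t ≤ Cβ := le_trans h1 (le_max_right _ _)
      have h3 : β⁻¹ ^ t * β ^ t = 1 := by
        rw [← mul_pow, inv_mul_cancel₀ hβ.ne', one_pow]
      calc (1:ℝ) = β⁻¹ ^ t * β ^ t := h3.symm
        _ ≤ Cβ * β ^ t := mul_le_mul_of_nonneg_right h2 (by positivity)
  have hNme : Nm ^ e ≤ C1 * Cβ * β ^ k / C1 := by
    have hβk : Nm ^ e * 1 ≤ Nm ^ e * (Cβ * β ^ t) :=
      mul_le_mul_of_nonneg_left hβt (by positivity)
    rw [mul_one] at hβk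
    calc Nm ^ e ≤ Nm ^ e * (Cβ * β ^ t) := hβk
      _ = Cβ * (Nm ^ e * β ^ t) := by ring
      _ = Cβ * β ^ k := by rw [hβpow]
      _ = C1 * Cβ * β ^ k / C1 := by
          rw [mul_comm C1 Cβ, mul_assoc, mul_div_assoc]
          rw [mul_comm C1 (β ^ k), mul_div_assoc, div_self (by positivity : C1 ≠ 0), mul_one]
  calc ‖d^[k] x‖ ≤ Nm ^ e * (C1 * ‖x‖) := hkx
    _ ≤ (C1 * Cβ * β ^ k / C1) * (C1 * ‖x‖) := by
        apply mul_le_mul_of_nonneg_right hNme (by positivity)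
    _ = C1 * Cβ * β ^ k * ‖x‖ := by
        field_simp
  
end OpN

section Taylor

variable {K : Type} [NontriviallyNormedField K] [CharZero K] {d : K → K}

lemma coeff_sum_bound (hna : IsNonarchimedean fun x : K => ‖x‖)
    {s : ℝ} (hs : 0 < s) {ι : Type} (t : Finset ι) (F : ι → PowerSeries K) {A : ℝ}
    (hA : 0 ≤ A) (j : ℕ) (h : ∀ i ∈ t, ‖PowerSeries.coeff (R := K) j (F i)‖ * s ^ j ≤ A) :
    ‖PowerSeries.coeff (R := K) j (∑ i ∈ t, F i)‖ * s ^ j ≤ A := by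
  rw [map_sum, ← le_div_iff₀ (pow_pos hs j)]
  refine na_sum_le hna _ _ (by positivity) ?_
  intro i hi
  rw [le_div_iff₀ (pow_pos hs j)]
  exact h i hi

/-- Powers of the normalized Taylor series are the normalized Taylor series of powers. -/
lemma taylor_pow (hd : IsDerivation d) {x : K} (hx : x ≠ 0) (n : ℕ) (hn : 1 ≤ n) :
    (PowerSeries.mk fun k => d^[k] x / ((k.factorial : K) * x)) ^ n
      = PowerSeries.mk fun k => d^[k] (x ^ n) / ((k.factorial : K) * x ^ n) := by
  induction n with
  | zero => omega
  | succ n ih =>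
    rcases Nat.lt_or_ge n 1 with h0 | h1
    · have : n = 0 := by omega
      subst this
      simp [pow_one]
    · rw [pow_succ, ih h1]
      ext k
      rw [PowerSeries.coeff_mul, PowerSeries.coeff_mk]
      have hleib := iter_leibniz hd k (x ^ n) x
      have hxx : x ^ (n+1) = x ^ n * x := by ring
      rw [hxx, hleib, Finset.sum_div]
      refine Finset.sum_congr rfl ?_
      intro uv huv
      have huv' : uv.1 + uv.2 = k := Finset.HasAntidiagonal.mem_antidiagonal.mp huv
      rw [PowerSeries.coeff_mk, PowerSeries.coeff_mk]
      have hukk : uv.1 ≤ k := by omega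
      have hfact : (k.choose uv.1 * uv.1.factorial * uv.2.factorial : ℕ) = k.factorial := by
        have := Nat.choose_mul_factorial_mul_factorial hukk
        rw [show k - uv.1 = uv.2 by omega] at this
        exact this
      have hfactK : ((k.choose uv.1 : ℕ) : K) * (uv.1.factorial : K) * (uv.2.factorial : K)
          = (k.factorial : K) := by exact_mod_cast congrArg (fun z : ℕ => (z : K)) hfact
      have h1 : (uv.1.factorial : K) ≠ 0 := Nat.cast_ne_zero.mpr (Nat.factorial_ne_zero _)
      have h2 : (uv.2.factorial : K) ≠ 0 := Nat.cast_ne_zero.mpr (Nat.factorial_ne_zero _)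
      have h3 : (k.factorial : K) ≠ 0 := Nat.cast_ne_zero.mpr (Nat.factorial_ne_zero _)
      have h4 : ((k.choose uv.1 : ℕ) : K) ≠ 0 :=
        Nat.cast_ne_zero.mpr (Nat.choose_pos hukk).ne'
      have hxn : x ^ n ≠ 0 := pow_ne_zero n hx
      rw [← hfactK]
      field_simp

/-- Key estimate: single Taylor coefficients are bounded on the open disc of
radius `ω / βₘ`. -/
lemma lemmaA (hna : IsNonarchimedean fun x : K => ‖x‖) (hd : IsDerivation d)
    (hdb : IsBoundedMap d) {x : K} (hx : x ≠ 0) (q m : ℕ) (hm : 1 ≤ m)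
    (hβ : 0 < opNormOn (fun y : K => ‖y‖) (d^[m]) ^ ((m : ℝ)⁻¹)) {s : ℝ} (hs : 0 < s)
    (hsβ : s * opNormOn (fun y : K => ‖y‖) (d^[m]) ^ ((m : ℝ)⁻¹) < omegaK K) :
    ‖d^[q] x‖ * s ^ q ≤ ‖((q.factorial : ℕ) : K)‖ * ‖x‖ := by
  classical
  set β := opNormOn (fun y : K => ‖y‖) (d^[m]) ^ ((m : ℝ)⁻¹) with hβdef
  set ω := omegaK K with hωdef
  have hω : 0 < ω := omega_pos K hna
  set θ := s * β / ω with hθdef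
  have hθ0 : 0 ≤ θ := by positivity
  have hθ1 : θ < 1 := (div_lt_one hω).mpr hsβ
  have hθω : θ * ω = s * β := div_mul_cancel₀ _ hω.ne'
  obtain ⟨C, hC1, hgrow⟩ := growth hdb m hm hβ
  have hC0 : 0 < C := lt_of_lt_of_le one_pos hC1
  set H := PowerSeries.mk fun k => d^[k] x / ((k.factorial : K) * x) with hHdef
  -- coefficient bounds for all powers of H
  have hHb : ∀ n, 1 ≤ n → ∀ k, ‖PowerSeries.coeff (R := K) k (H ^ n)‖ * s ^ k ≤ C * θ ^ k := by
    intro n hn k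
    rw [hHdef, taylor_pow hd hx n hn, PowerSeries.coeff_mk]
    have hfac : ω ^ k ≤ ‖((k.factorial : ℕ) : K)‖ := norm_factorial_ge K hna k
    have hfacpos : (0:ℝ) < ‖((k.factorial : ℕ) : K)‖ := lt_of_lt_of_le (pow_pos hω k) hfac
    have hxn : (0:ℝ) < ‖x ^ n‖ := norm_pos_iff.mpr (pow_ne_zero n hx)
    rw [norm_div, norm_mul, div_mul_eq_mul_div, div_le_iff₀ (by positivity)]
    have h1 : ‖d^[k] (x ^ n)‖ * s ^ k ≤ C * β ^ k * ‖x ^ n‖ * s ^ k :=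
      mul_le_mul_of_nonneg_right (hgrow k (x ^ n)) (by positivity)
    refine le_trans h1 ?_
    have h2 : C * β ^ k * ‖x ^ n‖ * s ^ k = C * (s * β) ^ k * ‖x ^ n‖ := by
      rw [mul_pow]; ring
    rw [h2, ← hθω, mul_pow]
    calc C * (θ ^ k * ω ^ k) * ‖x ^ n‖
        ≤ C * (θ ^ k * ‖((k.factorial : ℕ) : K)‖) * ‖x ^ n‖ := by
          have : θ ^ k * ω ^ k ≤ θ ^ k * ‖((k.factorial : ℕ) : K)‖ :=
            mul_le_mul_of_nonneg_left hfac (by positivity)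
          exact mul_le_mul_of_nonneg_right (mul_le_mul_of_nonneg_left this hC0.le) (norm_nonneg _)
      _ = C * θ ^ k * (‖((k.factorial : ℕ) : K)‖ * ‖x ^ n‖) := by ring
  have hHC : ∀ u, ‖PowerSeries.coeff (R := K) u H‖ * s ^ u ≤ C := by
    intro u
    refine le_trans (by simpa using hHb 1 le_rfl u) ?_
    calc C * θ ^ u ≤ C * 1 := by
          have : θ ^ u ≤ 1 := pow_le_one₀ hθ0 hθ1.le
          exact mul_le_mul_of_nonneg_left this hC0.le
      _ = C := mul_one C
  -- the main claim : for all n ≥ 1, (‖H_q‖ s^q)^n ≤ C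
  have hkey : ∀ n, 1 ≤ n → (‖PowerSeries.coeff (R := K) q H‖ * s ^ q) ^ n ≤ C := by
    intro n hn
    -- choose truncation degree L
    obtain ⟨L, hLq, hLθ⟩ : ∃ L, q ≤ L ∧ C ^ n * θ ^ (L+1) ≤ C := by
      rcases eq_or_lt_of_le hθ0 with h0 | h0
      · exact ⟨q, le_rfl, by rw [← h0, zero_pow (Nat.succ_ne_zero q), mul_zero]; exact hC0.le⟩
      · obtain ⟨j, hj⟩ := exists_pow_lt_of_lt_one (show (0:ℝ) < C / C ^ n by positivity) hθ1
        refine ⟨max q j, le_max_left _ _, ?_⟩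
        have h1 : θ ^ (max q j + 1) ≤ θ ^ j :=
          pow_le_pow_of_le_one hθ0 hθ1.le (le_trans (le_max_right q j) (Nat.le_succ _))
        calc C ^ n * θ ^ (max q j + 1) ≤ C ^ n * θ ^ j :=
              mul_le_mul_of_nonneg_left h1 (by positivity)
          _ ≤ C ^ n * (C / C ^ n) := mul_le_mul_of_nonneg_left hj.le (by positivity)
          _ = C := by field_simp
    set P := PowerSeries.mk (fun k => if k ≤ L then PowerSeries.coeff (R := K) k H else 0) with hPdef
    have hPH : ∀ k, k ≤ L → PowerSeries.coeff (R := K) k P = PowerSeries.coeff (R := K) k H := by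
      intro k hk; rw [hPdef, PowerSeries.coeff_mk, if_pos hk]
    have hP0 : ∀ k, L < k → PowerSeries.coeff (R := K) k P = 0 := by
      intro k hk; rw [hPdef, PowerSeries.coeff_mk, if_neg (by omega)]
    have hPC : ∀ v, ‖PowerSeries.coeff (R := K) v P‖ * s ^ v ≤ C := by
      intro v
      rcases le_or_gt v L with h | h
      · rw [hPH v h]; exact hHC v
      · rw [hP0 v h]; simp; positivity
    -- argmax data
    set gP : ℕ → ℝ := fun k => ‖PowerSeries.coeff (R := K) k P‖ * s ^ k with hgP
    have hgPeq : ∀ kk, gP kk = ‖PowerSeries.coeff (R := K) kk P‖ * s ^ kk := fun _ => rfl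
    have hgex : ∃ k0, ∀ i, gP i ≤ gP k0 := by
      obtain ⟨b, hb, hbmax⟩ := Finset.exists_max_image (Finset.range (L+1)) gP
        ⟨0, Finset.mem_range.mpr (by omega)⟩
      refine ⟨b, fun i => ?_⟩
      rcases le_or_gt i L with h | h
      · exact hbmax i (Finset.mem_range.mpr (by omega))
      · have hz : gP i = 0 := by rw [hgPeq, hP0 i h]; simp
        rw [hz]
        have h1 : gP 0 ≤ gP b := hbmax 0 (Finset.mem_range.mpr (by omega))
        have h0 : 0 ≤ gP 0 := by rw [hgPeq]; positivity
        linarith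
    set k0 := Nat.find hgex with hk0def
    have ha_max : ∀ i, gP i ≤ gP k0 := Nat.find_spec hgex
    have ha_min : ∀ j, j < k0 → gP j < gP k0 := by
      intro j hj
      have := Nat.find_min hgex hj
      push_neg at this
      obtain ⟨i, hi⟩ := this
      exact lt_of_lt_of_le hi (ha_max i)
    set a := gP k0 with hadef
    have haeq : a = ‖PowerSeries.coeff (R := K) k0 P‖ * s ^ k0 := rfl
    have ha_max' : ∀ i, ‖PowerSeries.coeff (R := K) i P‖ * s ^ i ≤ a := by
      intro i
      have h := ha_max i
      rw [hgPeq i] at h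
      exact h
    have ha_min' : ∀ j, j < k0 → ‖PowerSeries.coeff (R := K) j P‖ * s ^ j < a := by
      intro j hj
      have h := ha_min j hj
      rw [hgPeq j] at h
      exact h
    have hA0a : ‖PowerSeries.coeff (R := K) q H‖ * s ^ q ≤ a := by
      have h := ha_max' q
      rw [hPH q hLq] at h
      exact h
    have ha0 : 0 ≤ a := le_trans (by positivity) hA0a
    rcases eq_or_lt_of_le ha0 with haz | hapos
    · -- a = 0 : trivial
      have : ‖PowerSeries.coeff (R := K) q H‖ * s ^ q = 0 := le_antisymm (haz ▸ hA0a) (by positivity)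
      rw [this, zero_pow (by omega : n ≠ 0)]
      exact hC0.le
    -- now a > 0
    have hW : ∀ nn j, ‖PowerSeries.coeff (R := K) j (P ^ nn)‖ * s ^ j ≤ a ^ nn :=
      fun nn j => coeff_pow_bound hna hs ha0 ha_max' nn j
    -- the strict Gauss-Lemma induction
    have hterm : ∀ nn, (∀ i, i < nn*k0 → ‖PowerSeries.coeff (R := K) i (P ^ nn)‖ * s ^ i < a ^ nn) →
        ∀ (j' : ℕ) (uv : ℕ × ℕ), uv.1 + uv.2 = j' → (uv.1 < nn*k0 ∨ uv.2 < k0) →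
        ‖PowerSeries.coeff (R := K) uv.1 (P ^ nn) * PowerSeries.coeff (R := K) uv.2 P‖ < a ^ (nn+1) / s ^ j' := by
      intro nn ihs j' uv huv hcase
      rw [lt_div_iff₀ (pow_pos hs j'), norm_mul]
      have hsplit : s ^ j' = s ^ uv.1 * s ^ uv.2 := by rw [← pow_add, huv]
      rw [hsplit, show ‖PowerSeries.coeff (R := K) uv.1 (P ^ nn)‖ * ‖PowerSeries.coeff (R := K) uv.2 P‖ *
          (s ^ uv.1 * s ^ uv.2) = (‖PowerSeries.coeff (R := K) uv.1 (P ^ nn)‖ * s ^ uv.1) *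
          (‖PowerSeries.coeff (R := K) uv.2 P‖ * s ^ uv.2) from by ring]
      rcases hcase with h | h
      · calc (‖PowerSeries.coeff (R := K) uv.1 (P ^ nn)‖ * s ^ uv.1) *
            (‖PowerSeries.coeff (R := K) uv.2 P‖ * s ^ uv.2)
            ≤ (‖PowerSeries.coeff (R := K) uv.1 (P ^ nn)‖ * s ^ uv.1) * a :=
              mul_le_mul_of_nonneg_left (ha_max' uv.2) (by positivity)
          _ < a ^ nn * a := mul_lt_mul_of_pos_right (ihs uv.1 h) hapos
          _ = a ^ (nn+1) := by ring
      · calc (‖PowerSeries.coeff (R := K) uv.1 (P ^ nn)‖ * s ^ uv.1) *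
            (‖PowerSeries.coeff (R := K) uv.2 P‖ * s ^ uv.2)
            ≤ a ^ nn * (‖PowerSeries.coeff (R := K) uv.2 P‖ * s ^ uv.2) :=
              mul_le_mul_of_nonneg_right (hW nn uv.1) (by positivity)
          _ < a ^ nn * a := by
              have hpos : (0:ℝ) < a ^ nn := pow_pos hapos nn
              exact mul_lt_mul_of_pos_left (ha_min' uv.2 h) hpos
          _ = a ^ (nn+1) := by ring
    have hJ : ∀ nn, 1 ≤ nn → (a ^ nn ≤ ‖PowerSeries.coeff (R := K) (nn*k0) (P ^ nn)‖ * s ^ (nn*k0)) ∧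
        (∀ i, i < nn*k0 → ‖PowerSeries.coeff (R := K) i (P ^ nn)‖ * s ^ i < a ^ nn) := by
      intro nn hnn
      induction nn with
      | zero => omega
      | succ nn ih =>
        rcases Nat.lt_or_ge nn 1 with h0 | h1
        · have : nn = 0 := by omega
          subst this
          constructor
          · simp only [zero_add, pow_one, one_mul]
            exact le_of_eq haeq
          · intro i hi
            simp only [zero_add, pow_one, one_mul] at hi ⊢
            exact ha_min' i hi
        · obtain ⟨ihm, ihs⟩ := ih h1
          have hmem : ((nn*k0 : ℕ), k0) ∈ Finset.HasAntidiagonal.antidiagonal ((nn+1)*k0) := by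
            rw [Finset.HasAntidiagonal.mem_antidiagonal]; ring
          constructor
          · rw [pow_succ P nn, PowerSeries.coeff_mul, ← Finset.add_sum_erase _ _ hmem]
            set main := PowerSeries.coeff (R := K) (nn*k0) (P ^ nn) * PowerSeries.coeff (R := K) k0 P with hmaindef
            have hmain : a ^ (nn+1) / s ^ ((nn+1)*k0) ≤ ‖main‖ := by
              rw [div_le_iff₀ (pow_pos hs _), hmaindef, norm_mul]
              have hsplit : s ^ ((nn+1)*k0) = s ^ (nn*k0) * s ^ k0 := by
                rw [← pow_add]; ring_nf
              rw [hsplit, show ‖PowerSeries.coeff (R := K) (nn*k0) (P ^ nn)‖ *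
                ‖PowerSeries.coeff (R := K) k0 P‖ * (s ^ (nn*k0) * s ^ k0)
                = (‖PowerSeries.coeff (R := K) (nn*k0) (P ^ nn)‖ * s ^ (nn*k0)) *
                  (‖PowerSeries.coeff (R := K) k0 P‖ * s ^ k0) from by ring]
            -- a^(nn+1) = a^nn * a ≤ main1 * main2
              have h2 : (0:ℝ) ≤ a ^ nn := by positivity
              calc a ^ (nn+1) = a ^ nn * a := by ring
                _ ≤ (‖PowerSeries.coeff (R := K) (nn*k0) (P ^ nn)‖ * s ^ (nn*k0)) * a :=
                    mul_le_mul_of_nonneg_right ihm hapos.le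
                _ = (‖PowerSeries.coeff (R := K) (nn*k0) (P ^ nn)‖ * s ^ (nn*k0)) *
                    (‖PowerSeries.coeff (R := K) k0 P‖ * s ^ k0) := by rw [haeq]
            have hrest : ‖∑ uv ∈ (Finset.HasAntidiagonal.antidiagonal ((nn+1)*k0)).erase ((nn*k0 : ℕ), k0),
                PowerSeries.coeff (R := K) uv.1 (P ^ nn) * PowerSeries.coeff (R := K) uv.2 P‖
                < a ^ (nn+1) / s ^ ((nn+1)*k0) := by
              refine na_sum_lt hna _ _ (by positivity) ?_
              intro uv huv
              have hmem' := Finset.mem_erase.mp huv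
              have huv' : uv.1 + uv.2 = (nn+1)*k0 := Finset.HasAntidiagonal.mem_antidiagonal.mp hmem'.2
              have hne : ¬(uv.1 = nn*k0 ∧ uv.2 = k0) := by
                intro hcc
                exact hmem'.1 (Prod.ext hcc.1 hcc.2)
              have hcase : uv.1 < nn*k0 ∨ uv.2 < k0 := by
                by_contra hno
                push_neg at hno
                have h1 := hno.1
                have h2 := hno.2
                have : (nn+1)*k0 = nn*k0 + k0 := by ring
                omega
              exact hterm nn ihs _ uv huv' hcase
            have := na_add_ge hna (lt_of_lt_of_le hrest hmain)
            rw [← div_le_iff₀ (pow_pos hs _)]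
            exact le_trans hmain this
          · intro i hi
            rw [pow_succ P nn, PowerSeries.coeff_mul]
            rw [← lt_div_iff₀ (pow_pos hs _)]
            refine na_sum_lt hna _ _ (by positivity) ?_
            intro uv huv
            have huv' : uv.1 + uv.2 = i := Finset.HasAntidiagonal.mem_antidiagonal.mp huv
            have hcase : uv.1 < nn*k0 ∨ uv.2 < k0 := by
              have : (nn+1)*k0 = nn*k0 + k0 := by ring
              omega
            exact hterm nn ihs _ uv huv' hcase
    -- error series bound
    have hfac1 : ∀ j, ‖PowerSeries.coeff (R := K) j
        (∑ i ∈ Finset.range n, H ^ i * P ^ (n - 1 - i))‖ * s ^ j ≤ C ^ (n-1) := by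
      intro j
      refine coeff_sum_bound hna hs _ _ (by positivity) j ?_
      intro i hi
      have hiLt : i < n := Finset.mem_range.mp hi
      have hHp : ∀ u, ‖PowerSeries.coeff (R := K) u (H ^ i)‖ * s ^ u ≤ C ^ i :=
        fun u => coeff_pow_bound hna hs hC0.le hHC i u
      have hPp : ∀ u, ‖PowerSeries.coeff (R := K) u (P ^ (n-1-i))‖ * s ^ u ≤ C ^ (n-1-i) :=
        fun u => coeff_pow_bound hna hs hC0.le hPC (n-1-i) u
      have := coeff_mul_bound hna hs (by positivity) (by positivity) hHp hPp j
      refine le_trans this ?_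
      rw [← pow_add]
      have : i + (n - 1 - i) = n - 1 := by omega
      rw [this]
    have hHP : ∀ u, ‖PowerSeries.coeff (R := K) u (H - P)‖ * s ^ u ≤ C * θ ^ (L+1) := by
      intro u
      rcases le_or_gt u L with h | h
      · rw [map_sub, hPH u h, sub_self]
        simp
        positivity
      · rw [map_sub, hP0 u h, sub_zero]
        refine le_trans (by simpa using hHb 1 le_rfl u) ?_
        have : θ ^ u ≤ θ ^ (L+1) := pow_le_pow_of_le_one hθ0 hθ1.le (by omega)
        exact mul_le_mul_of_nonneg_left this hC0.le
    have hE : ∀ j, ‖PowerSeries.coeff (R := K) j (H ^ n - P ^ n)‖ * s ^ j ≤ C ^ n * θ ^ (L+1) := by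
      intro j
      rw [← geom_sum₂_mul H P n]
      have := coeff_mul_bound hna hs (show (0:ℝ) ≤ C ^ (n-1) by positivity)
        (show (0:ℝ) ≤ C * θ ^ (L+1) by positivity) hfac1 hHP j
      refine le_trans this ?_
      rw [show C ^ (n-1) * (C * θ ^ (L+1)) = C ^ (n-1) * C * θ ^ (L+1) from by ring]
      rw [← pow_succ]
      have : n - 1 + 1 = n := by omega
      rw [this]
    have hPn : ∀ j, ‖PowerSeries.coeff (R := K) j (P ^ n)‖ * s ^ j ≤ C := by
      intro j
      have hid : P ^ n = H ^ n - (H ^ n - P ^ n) := by ring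
      rw [hid, map_sub]
      have h1 := na_sub hna (PowerSeries.coeff (R := K) j (H ^ n)) (PowerSeries.coeff (R := K) j (H ^ n - P ^ n))
      have h2 : ‖PowerSeries.coeff (R := K) j (H ^ n) - PowerSeries.coeff (R := K) j (H ^ n - P ^ n)‖ * s ^ j
          ≤ max (‖PowerSeries.coeff (R := K) j (H ^ n)‖ * s ^ j)
              (‖PowerSeries.coeff (R := K) j (H ^ n - P ^ n)‖ * s ^ j) := by
        rw [← max_mul_of_nonneg _ _ (by positivity : (0:ℝ) ≤ s ^ j)]
        exact mul_le_mul_of_nonneg_right h1 (by positivity)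
      refine le_trans h2 (max_le ?_ ?_)
      · refine le_trans (hHb n hn j) ?_
        calc C * θ ^ j ≤ C * 1 := mul_le_mul_of_nonneg_left (pow_le_one₀ hθ0 hθ1.le) hC0.le
          _ = C := mul_one C
      · exact le_trans (hE j) hLθ
    calc (‖PowerSeries.coeff (R := K) q H‖ * s ^ q) ^ n ≤ a ^ n :=
          pow_le_pow_left₀ (by positivity) hA0a n
      _ ≤ ‖PowerSeries.coeff (R := K) (n*k0) (P ^ n)‖ * s ^ (n*k0) := (hJ n hn).1
      _ ≤ C := hPn _
  -- conclude
  have hq1 : ‖PowerSeries.coeff (R := K) q H‖ * s ^ q ≤ 1 := by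
    by_contra hgt
    push_neg at hgt
    obtain ⟨n0, hn0⟩ := pow_unbounded_of_one_lt (max C 1) hgt
    have h1 : (‖PowerSeries.coeff (R := K) q H‖ * s ^ q) ^ n0
        ≤ (‖PowerSeries.coeff (R := K) q H‖ * s ^ q) ^ (n0+1) :=
      pow_le_pow_right₀ hgt.le (by omega)
    have h2 := hkey (n0+1) (by omega)
    have := lt_of_lt_of_le hn0 (le_trans h1 h2)
    exact absurd this (not_lt.mpr (le_max_left C 1))
  -- unfold coefficient
  have hcoeff : PowerSeries.coeff (R := K) q H = d^[q] x / ((q.factorial : K) * x) := by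
    rw [hHdef, PowerSeries.coeff_mk]
  rw [hcoeff, norm_div, norm_mul] at hq1
  have hfq : (0:ℝ) < ‖((q.factorial : ℕ) : K)‖ :=
    norm_pos_iff.mpr (Nat.cast_ne_zero.mpr (Nat.factorial_ne_zero q))
  have hxq : (0:ℝ) < ‖x‖ := norm_pos_iff.mpr hx
  rw [div_mul_eq_mul_div, div_le_one (by positivity)] at hq1
  exact hq1

end Taylor

section LemB

variable {K : Type} [NontriviallyNormedField K] [CharZero K] {d : K → K}

/-- The main estimate at radius `s ≤ ω/σ`. -/
lemma lemmaB (hna : IsNonarchimedean fun x : K => ‖x‖) (hd : IsDerivation d)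
    (hdb : IsBoundedMap d) (hσ : 0 < spNormK d) {s : ℝ} (hs : 0 < s)
    (hsσ : s * spNormK d ≤ omegaK K) (q : ℕ) (x : K) :
    ‖d^[q] x‖ * s ^ q ≤ ‖((q.factorial : ℕ) : K)‖ * ‖x‖ := by
  rcases eq_or_ne x 0 with rfl | hx
  · rw [dIter_zero hd q]
    simp
  have hω : 0 < omegaK K := omega_pos K hna
  -- prove the bound for each radius δ * s with 0 < δ < 1, then pass to the limit
  have hδbound : ∀ δ : ℝ, 0 < δ → δ < 1 → ‖d^[q] x‖ * (δ * s) ^ q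
      ≤ ‖((q.factorial : ℕ) : K)‖ * ‖x‖ := by
    intro δ hδ0 hδ1
    -- find m with (δ*s) * β_m < ω
    have hσlt : spNormK d < omegaK K / (δ * s) := by
      have h1 : spNormK d ≤ omegaK K / s := by
        rw [le_div_iff₀ hs]
        rw [mul_comm]
        exact hsσ
      have h2 : omegaK K / s < omegaK K / (δ * s) := by
        apply div_lt_div_of_pos_left hω (by positivity)
        nlinarith
      exact lt_of_le_of_lt h1 h2
    have hne : Set.Nonempty {t : ℝ | ∃ n : ℕ, 1 ≤ n ∧
        t = (opNormOn (fun y : K => ‖y‖) (d^[n])) ^ ((n : ℝ)⁻¹)} := ⟨_, 1, le_rfl, rfl⟩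
    have hbdd : BddBelow {t : ℝ | ∃ n : ℕ, 1 ≤ n ∧
        t = (opNormOn (fun y : K => ‖y‖) (d^[n])) ^ ((n : ℝ)⁻¹)} := by
      refine ⟨0, ?_⟩
      rintro t ⟨n, hn, rfl⟩
      exact Real.rpow_nonneg (opN_nonneg hdb n) _
    have hcinf : sInf {t : ℝ | ∃ n : ℕ, 1 ≤ n ∧
        t = (opNormOn (fun y : K => ‖y‖) (d^[n])) ^ ((n : ℝ)⁻¹)} < omegaK K / (δ * s) := hσlt
    obtain ⟨t, ht, htlt⟩ := exists_lt_of_csInf_lt hne hcinf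
    obtain ⟨m, hm, rfl⟩ := ht
    have hβσ : spNormK d ≤ (opNormOn (fun y : K => ‖y‖) (d^[m])) ^ ((m : ℝ)⁻¹) :=
      csInf_le hbdd ⟨m, hm, rfl⟩
    have hβpos : 0 < (opNormOn (fun y : K => ‖y‖) (d^[m])) ^ ((m : ℝ)⁻¹) :=
      lt_of_lt_of_le hσ hβσ
    have hsβ : (δ * s) * (opNormOn (fun y : K => ‖y‖) (d^[m])) ^ ((m : ℝ)⁻¹) < omegaK K := by
      have h := (lt_div_iff₀ (by positivity : (0:ℝ) < δ * s)).mp htlt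
      calc (δ * s) * (opNormOn (fun y : K => ‖y‖) (d^[m])) ^ ((m : ℝ)⁻¹)
          = (opNormOn (fun y : K => ‖y‖) (d^[m])) ^ ((m : ℝ)⁻¹) * (δ * s) := by ring
        _ < omegaK K := h
    exact lemmaA hna hd hdb hx q m hm hβpos (by positivity) hsβ
  -- pass to the limit δ → 1⁻
  have hcont : Filter.Tendsto (fun δ : ℝ => ‖d^[q] x‖ * (δ * s) ^ q)
      (nhdsWithin 1 (Set.Iio 1)) (nhds (‖d^[q] x‖ * (1 * s) ^ q)) := by
    apply Filter.Tendsto.mono_left _ nhdsWithin_le_nhds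
    exact Continuous.tendsto (by continuity) 1
  have hev : ∀ᶠ δ in nhdsWithin (1:ℝ) (Set.Iio 1),
      ‖d^[q] x‖ * (δ * s) ^ q ≤ ‖((q.factorial : ℕ) : K)‖ * ‖x‖ := by
    have hmem : Set.Ioo (0:ℝ) 1 ∈ nhdsWithin (1:ℝ) (Set.Iio 1) :=
      Ioo_mem_nhdsLT_of_mem (by constructor <;> norm_num)
    exact Filter.eventually_of_mem hmem (fun δ hδ => hδbound δ hδ.1 hδ.2)
  have := le_of_tendsto hcont hev
  rwa [one_mul] at this

end LemB

section Theta2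

variable {K : Type} [NontriviallyNormedField K] [CharZero K] {d : K → K}

lemma alt_inv_sum {n : ℕ} (hn : n ≠ 0) :
    ∑ mm ∈ Finset.range (n+1), ((-1 : K) ^ mm / (((n - mm).factorial : K) * (mm.factorial : K)))
      = 0 := by
  have hfn : ((n.factorial : ℕ) : K) ≠ 0 := Nat.cast_ne_zero.mpr (Nat.factorial_ne_zero n)
  have hstep : ∀ mm ∈ Finset.range (n+1),
      ((-1 : K) ^ mm / (((n - mm).factorial : K) * (mm.factorial : K)))
        = ((-1 : K) ^ mm * ((n.choose mm : ℕ) : K)) / ((n.factorial : ℕ) : K) := by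
    intro mm hmm
    have hmn : mm ≤ n := by
      have := Finset.mem_range.mp hmm; omega
    have hfact : (n.choose mm * mm.factorial * (n - mm).factorial : ℕ) = n.factorial :=
      Nat.choose_mul_factorial_mul_factorial hmn
    have hfactK : ((n.choose mm : ℕ) : K) * ((mm.factorial : ℕ) : K)
        * (((n - mm).factorial : ℕ) : K) = ((n.factorial : ℕ) : K) := by
      exact_mod_cast congrArg (fun z : ℕ => (z : K)) hfact
    have h1 : ((mm.factorial : ℕ) : K) ≠ 0 := Nat.cast_ne_zero.mpr (Nat.factorial_ne_zero _)
    have h2 : (((n - mm).factorial : ℕ) : K) ≠ 0 := Nat.cast_ne_zero.mpr (Nat.factorial_ne_zero _)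
    have h3 : ((n.choose mm : ℕ) : K) ≠ 0 := Nat.cast_ne_zero.mpr (Nat.choose_pos hmn).ne'
    rw [← hfactK]
    field_simp
  rw [Finset.sum_congr rfl hstep, ← Finset.sum_div]
  have hz : (∑ mm ∈ Finset.range (n+1), ((-1 : K) ^ mm * ((n.choose mm : ℕ) : K))) = 0 := by
    have hint := Int.alternating_sum_range_choose_of_ne hn
    have := congrArg (fun z : ℤ => (z : K)) hint
    push_cast at this
    exact_mod_cast this
  rw [hz, zero_div]

/-- `Θ` is an involution. -/
lemma theta_theta (hd : IsDerivation d) (b : ℕ → K) (i : ℕ) :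
    thetaMap d (thetaMap d b) i = b i := by
  classical
  unfold thetaMap
  -- push the iterated derivative inside the inner sum
  have hstep1 : ∀ jk : ℕ × ℕ, jk ∈ Finset.HasAntidiagonal.antidiagonal i →
      ((-1 : K) ^ jk.1 / (jk.2.factorial : K)) * d^[jk.2]
        (∑ lm ∈ Finset.HasAntidiagonal.antidiagonal jk.1, ((-1 : K) ^ lm.1 / (lm.2.factorial : K)) * d^[lm.2] (b lm.1))
      = ∑ lm ∈ Finset.HasAntidiagonal.antidiagonal jk.1, ((-1 : K) ^ jk.1 / (jk.2.factorial : K)) *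
          (((-1 : K) ^ lm.1 / (lm.2.factorial : K)) * d^[jk.2 + lm.2] (b lm.1)) := by
    intro jk _
    rw [dIter_sum hd, Finset.mul_sum]
    refine Finset.sum_congr rfl ?_
    intro lm _
    rw [dIter_mul_const hd (d_coef hd lm.1 lm.2), Function.iterate_add_apply]
  rw [Finset.sum_congr rfl hstep1]
  -- convert to range sums
  rw [Finset.Nat.sum_antidiagonal_eq_sum_range_succ_mk]
  have hstep2 : ∀ j ∈ Finset.range (i+1),
      (∑ lm ∈ Finset.HasAntidiagonal.antidiagonal j, ((-1 : K) ^ j / ((i - j).factorial : K)) *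
          (((-1 : K) ^ lm.1 / (lm.2.factorial : K)) * d^[(i - j) + lm.2] (b lm.1)))
      = ∑ l ∈ Finset.range (j+1), ((-1 : K) ^ j / ((i - j).factorial : K)) *
          (((-1 : K) ^ l / ((j - l).factorial : K)) * d^[(i - j) + (j - l)] (b l)) := by
    intro j _
    rw [Finset.Nat.sum_antidiagonal_eq_sum_range_succ_mk]
  rw [Finset.sum_congr rfl hstep2]
  -- swap the two sums
  have hswap : (∑ j ∈ Finset.range (i+1), ∑ l ∈ Finset.range (j+1),
      ((-1 : K) ^ j / ((i - j).factorial : K)) *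
        (((-1 : K) ^ l / ((j - l).factorial : K)) * d^[(i - j) + (j - l)] (b l)))
      = ∑ l ∈ Finset.range (i+1), ∑ j ∈ Finset.Ico l (i+1),
        ((-1 : K) ^ j / ((i - j).factorial : K)) *
          (((-1 : K) ^ l / ((j - l).factorial : K)) * d^[(i - j) + (j - l)] (b l)) := by
    have := Finset.sum_Ico_Ico_comm 0 (i+1) (fun l j =>
      ((-1 : K) ^ j / ((i - j).factorial : K)) *
        (((-1 : K) ^ l / ((j - l).factorial : K)) * d^[(i - j) + (j - l)] (b l)))
    simp only [← Finset.range_eq_Ico] at this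
    exact this.symm
  rw [hswap]
  -- evaluate the inner sums
  have hinner : ∀ l ∈ Finset.range (i+1),
      (∑ j ∈ Finset.Ico l (i+1), ((-1 : K) ^ j / ((i - j).factorial : K)) *
        (((-1 : K) ^ l / ((j - l).factorial : K)) * d^[(i - j) + (j - l)] (b l)))
      = if l = i then b i else 0 := by
    intro l hl
    have hli : l ≤ i := by have := Finset.mem_range.mp hl; omega
    rw [Finset.sum_Ico_eq_sum_range]
    have hlen : i + 1 - l = (i - l) + 1 := by omega
    rw [hlen]
    set n := i - l with hn
    have hterm : ∀ mm ∈ Finset.range (n+1),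
        ((-1 : K) ^ (l + mm) / ((i - (l + mm)).factorial : K)) *
          (((-1 : K) ^ l / (((l + mm) - l).factorial : K)) * d^[(i - (l + mm)) + ((l + mm) - l)] (b l))
        = ((-1 : K) ^ mm / (((n - mm).factorial : K) * (mm.factorial : K))) * d^[n] (b l) := by
      intro mm hmm
      have hmmn : mm ≤ n := by have := Finset.mem_range.mp hmm; omega
      have e1 : (l + mm) - l = mm := by omega
      have e2 : i - (l + mm) = n - mm := by omega
      have e3 : (i - (l + mm)) + ((l + mm) - l) = n := by omega
      rw [e3, e1, e2]
      have hsign : (-1 : K) ^ (l + mm) * (-1 : K) ^ l = (-1 : K) ^ mm := by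
        have : (-1 : K) ^ (l + mm) * (-1 : K) ^ l = ((-1 : K) ^ (l + l)) * (-1:K) ^ mm := by
          rw [← pow_add, ← pow_add]; ring_nf
        rw [this, Even.neg_one_pow ⟨l, rfl⟩, one_mul]
      field_simp
      rw [← hsign]
      ring
    rw [Finset.sum_congr rfl hterm, ← Finset.sum_mul]
    rcases eq_or_ne l i with rfl | hne
    · have hn0 : n = 0 := by omega
      rw [if_pos rfl, hn0]
      simp
    · rw [if_neg hne]
      have hn0 : n ≠ 0 := by omega
      rw [alt_inv_sum hn0, zero_mul]
  rw [Finset.sum_congr rfl hinner, Finset.sum_ite_eq' (Finset.range (i+1)) i (fun _ => b i)]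
  rw [if_pos (Finset.mem_range.mpr (by omega))]

end Theta2

/-- The involution `Θ` preserves the `π`-norm `sup_i ‖a_i‖ π_i` for any
sequence `π` with `(π_{i+1}/π_i)` nondecreasing and bounded by `r(K,∂)`. -/
theorem thetaMap_isometric_for_pi_norm
    (K : Type) [NontriviallyNormedField K] [CompleteSpace K] [CharZero K]
    (hna : IsNonarchimedean fun x : K => ‖x‖)
    (d : K → K) (hd : IsDerivation d) (hd0 : d ≠ 0) (hdb : IsBoundedMap d)
    (π : ℕ → ℝ) (hpos : ∀ i, 0 < π i)
    (hmono : Monotone fun i => π (i + 1) / π i)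
    (hsup : ∀ i, π (i + 1) / π i ≤ radius d)
    (a : ℕ → K) (ha : BddAbove (Set.range fun i => ‖a i‖ * π i)) :
    BddAbove (Set.range fun i => ‖thetaMap d a i‖ * π i) ∧
      (∀ C : ℝ, (∀ i, ‖a i‖ * π i ≤ C) → ∀ i, ‖thetaMap d a i‖ * π i ≤ C) ∧
      sSup (Set.range fun i => ‖thetaMap d a i‖ * π i)
        = sSup (Set.range fun i => ‖a i‖ * π i) := by
  classical
  have hω : 0 < omegaK K := omega_pos K hna
  have hSne : Set.Nonempty {t : ℝ | ∃ n : ℕ, 1 ≤ n ∧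
      t = (opNormOn (fun y : K => ‖y‖) (d^[n])) ^ ((n : ℝ)⁻¹)} := ⟨_, 1, le_rfl, rfl⟩
  have hσ0 : 0 ≤ spNormK d := by
    apply le_csInf hSne
    rintro t ⟨n, hn, rfl⟩
    exact Real.rpow_nonneg (opN_nonneg hdb n) _
  have hσ : 0 < spNormK d := by
    rcases eq_or_lt_of_le hσ0 with h0 | h
    · exfalso
      have h1 := hsup 0
      rw [radius, ← h0, div_zero] at h1
      exact absurd h1 (not_le.mpr (div_pos (hpos 1) (hpos 0)))
    · exact h
  have hrpos : 0 < radius d := div_pos hω hσ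
  have hrσ : radius d * spNormK d = omegaK K := div_mul_cancel₀ _ hσ.ne'
  have hLB : ∀ (q : ℕ) (x : K), ‖d^[q] x‖ * (radius d) ^ q ≤ ‖((q.factorial : ℕ) : K)‖ * ‖x‖ :=
    fun q x => lemmaB hna hd hdb hσ hrpos (le_of_eq hrσ) q x
  have hπr : ∀ j k, π (j + k) ≤ π j * (radius d) ^ k := by
    intro j k
    induction k with
    | zero => simp
    | succ k ih =>
      have h1 : π (j + k + 1) / π (j + k) ≤ radius d := hsup (j+k)
      have h2 : π (j + k + 1) = (π (j + k + 1) / π (j + k)) * π (j + k) :=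
        (div_mul_cancel₀ _ (hpos (j+k)).ne').symm
      calc π (j + (k+1)) = π (j + k + 1) := by rw [show j + (k+1) = j + k + 1 from by omega]
        _ = (π (j + k + 1) / π (j + k)) * π (j + k) := h2
        _ ≤ radius d * (π j * radius d ^ k) := mul_le_mul h1 ih (hpos _).le hrpos.le
        _ = π j * radius d ^ (k+1) := by ring
  have key : ∀ (b : ℕ → K) (C : ℝ), (∀ i, ‖b i‖ * π i ≤ C) →
      ∀ i, ‖thetaMap d b i‖ * π i ≤ C := by
    intro b C hC i
    have hC0 : 0 ≤ C := le_trans (mul_nonneg (norm_nonneg _) (hpos 0).le) (hC 0)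
    unfold thetaMap
    rw [← le_div_iff₀ (hpos i)]
    refine na_sum_le hna _ _ (div_nonneg hC0 (hpos i).le) ?_
    intro jk hjk
    have hjk' : jk.1 + jk.2 = i := Finset.HasAntidiagonal.mem_antidiagonal.mp hjk
    rw [le_div_iff₀ (hpos i)]
    have hfq : (0:ℝ) < ‖((jk.2.factorial : ℕ) : K)‖ :=
      norm_pos_iff.mpr (Nat.cast_ne_zero.mpr (Nat.factorial_ne_zero _))
    have hnorm : ‖((-1 : K) ^ jk.1 / (jk.2.factorial : K)) * d^[jk.2] (b jk.1)‖
        = ‖d^[jk.2] (b jk.1)‖ / ‖((jk.2.factorial : ℕ) : K)‖ := by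
      rw [norm_mul, norm_div, norm_pow, norm_neg, norm_one, one_pow]
      ring
    rw [hnorm, div_mul_eq_mul_div, div_le_iff₀ hfq]
    calc ‖d^[jk.2] (b jk.1)‖ * π i ≤ ‖d^[jk.2] (b jk.1)‖ * (π jk.1 * radius d ^ jk.2) := by
          apply mul_le_mul_of_nonneg_left _ (norm_nonneg _)
          rw [← hjk']
          exact hπr jk.1 jk.2
      _ = (‖d^[jk.2] (b jk.1)‖ * radius d ^ jk.2) * π jk.1 := by ring
      _ ≤ (‖((jk.2.factorial : ℕ) : K)‖ * ‖b jk.1‖) * π jk.1 :=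
          mul_le_mul_of_nonneg_right (hLB jk.2 (b jk.1)) (hpos jk.1).le
      _ = (‖b jk.1‖ * π jk.1) * ‖((jk.2.factorial : ℕ) : K)‖ := by ring
      _ ≤ C * ‖((jk.2.factorial : ℕ) : K)‖ :=
          mul_le_mul_of_nonneg_right (hC jk.1) hfq.le
  have hCa : ∀ i, ‖a i‖ * π i ≤ sSup (Set.range fun i => ‖a i‖ * π i) :=
    fun i => le_csSup ha ⟨i, rfl⟩
  have hbdd : BddAbove (Set.range fun i => ‖thetaMap d a i‖ * π i) := by
    refine ⟨sSup (Set.range fun i => ‖a i‖ * π i), ?_⟩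
    rintro t ⟨i, rfl⟩
    exact key a _ hCa i
  refine ⟨hbdd, fun C hC i => key a C hC i, ?_⟩
  apply le_antisymm
  · apply csSup_le (Set.range_nonempty _)
    rintro t ⟨i, rfl⟩
    exact key a _ hCa i
  · apply csSup_le (Set.range_nonempty _)
    rintro t ⟨i, rfl⟩
    have h1 : ∀ j, ‖thetaMap d a j‖ * π j
        ≤ sSup (Set.range fun i => ‖thetaMap d a i‖ * π i) :=
      fun j => le_csSup hbdd ⟨j, rfl⟩
    have h2 := key (thetaMap d a) _ h1 i
    rw [theta_theta hd a i] at h2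
    exact h2


end Ohkubo
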